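/- Let λ be a positive σ-finite Borel measure on an open set Ω ⊆ ℝᴺ, and let φᵢ : Ω → [0, ∞], i ∈ ℕ, be Borel functions. Then ∫_Ω sup_i φᵢ dλ = sup { Σ_{i ∈ I} ∫_{Aᵢ} φᵢ dλ }, where the supremum is taken over all finite sets I ⊂ ℕ and all finite families {Aᵢ}_{i ∈ I} of pairwise disjoint open sets with compact closure contained in Ω. -/

import Mathlib

/-!
By monotone convergence it suffices to bound `∫_Ω max_{i ≤ m} φ i` for each `m`. Partition `Ω`
into the measurable sets `B i` on which `φ i` is the first function attaining the maximum, so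
that `∫_Ω max_{i ≤ m} φ i = ∑ i, ∫_{B i} φ i`. The measures with densities `min (φ i) n` are
σ-finite, hence inner regular, so each `B i` can be replaced by a compact `K i ⊆ B i` at
arbitrarily small loss; finitely many disjoint compact subsets of `Ω` have disjoint open
neighbourhoods with compact closures in `Ω`. The reverse inequality holds because the `A i`
are disjoint subsets of `Ω`.
-/

open scoped ENNReal
open MeasureTheory Set

theorem exists_isOpen_disjoint_supersets_of_isCompact {ι X : Type*} [TopologicalSpace X]
    [T2Space X] [LocallyCompactSpace X] {Ω : Set X} (hΩ : IsOpen Ω) {I : Finset ι}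
    {K : ι → Set X} (hK : ∀ i ∈ I, IsCompact (K i)) (hKΩ : ∀ i ∈ I, K i ⊆ Ω)
    (hKdisj : ∀ i ∈ I, ∀ j ∈ I, i ≠ j → Disjoint (K i) (K j)) :
    ∃ A : ι → Set X, (∀ i ∈ I, K i ⊆ A i) ∧
      (∀ i ∈ I, IsOpen (A i) ∧ IsCompact (closure (A i)) ∧ closure (A i) ⊆ Ω) ∧
      (∀ i ∈ I, ∀ j ∈ I, i ≠ j → Disjoint (A i) (A j)) := by
  classical
  choose! L hL hKL hLΩ using fun i hi => exists_compact_between (hK i hi) hΩ (hKΩ i hi)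
  choose! U V hU hV hKU hKV hUV using fun i hi j hj hij =>
    SeparatedNhds.of_isCompact_isCompact (hK i hi) (hK j hj) (hKdisj i hi j hj hij)
  -- `U i j ⊇ K i` and `V i j ⊇ K j` are disjoint; `A i` lies in every `U i j` and every `V j i`.
  refine ⟨fun i => interior (L i) ∩ ⋂ j ∈ I.erase i, U i j ∩ V j i, ?_, ?_, ?_⟩
  · intro i hi
    refine subset_inter (hKL i hi) (subset_iInter₂ fun j hj => ?_)
    obtain ⟨hji, hj⟩ := Finset.mem_erase.1 hj
    exact subset_inter (hKU i hi j hj hji.symm) (hKV j hj i hi hji)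
  · intro i hi
    have hclosure : closure (interior (L i) ∩ ⋂ j ∈ I.erase i, U i j ∩ V j i) ⊆ L i :=
      closure_minimal (inter_subset_left.trans interior_subset) (hL i hi).isClosed
    refine ⟨isOpen_interior.inter (isOpen_biInter_finset fun j hj => ?_),
      (hL i hi).of_isClosed_subset isClosed_closure hclosure, hclosure.trans (hLΩ i hi)⟩
    obtain ⟨hji, hj⟩ := Finset.mem_erase.1 hj
    exact (hU i hi j hj hji.symm).inter (hV j hj i hi hji)
  · intro i hi j hj hij
    refine (hUV i hi j hj hij).mono ?_ ?_
    · exact inter_subset_right.trans <| (biInter_subset_of_mem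
        (Finset.mem_erase.2 ⟨hij.symm, hj⟩)).trans inter_subset_left
    · exact inter_subset_right.trans <| (biInter_subset_of_mem
        (Finset.mem_erase.2 ⟨hij, hi⟩)).trans inter_subset_right

theorem ENNReal.finsetSum_iSup_eq_iSup_pi {α : Type*} {κ : α → Type*} [∀ a, Nonempty (κ a)]
    (s : Finset α) (f : ∀ a, κ a → ℝ≥0∞) :
    ∑ a ∈ s, ⨆ j, f a j = ⨆ g : ∀ a, κ a, ∑ a ∈ s, f a (g a) := by
  classical
  calc ∑ a ∈ s, ⨆ j, f a j = ∑ a ∈ s, ⨆ g : ∀ a, κ a, f a (g a) :=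
        Finset.sum_congr rfl fun a _ => ((Function.surjective_eval a).iSup_comp (f a)).symm
    _ = _ := by
      refine ENNReal.finsetSum_iSup fun g g' =>
        ⟨fun a => if f a (g a) ≤ f a (g' a) then g' a else g a, fun a => ?_⟩
      dsimp only
      split_ifs with h
      · exact ⟨h, le_rfl⟩
      · exact ⟨le_rfl, (not_le.1 h).le⟩

theorem setLIntegral_eq_tsum_disjointed {X : Type*} [MeasurableSpace X] {μ : Measure X}
    {φ : ℕ → X → ℝ≥0∞} {G : X → ℝ≥0∞} (hφ : ∀ i, Measurable (φ i)) (hG : Measurable G)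
    (hattain : ∀ x, ∃ i, φ i x = G x) {s : Set X} (hs : MeasurableSet s) :
    ∫⁻ x in s, G x ∂μ =
      ∑' i, ∫⁻ x in disjointed (fun j => {x | φ j x = G x}) i ∩ s, φ i x ∂μ := by
  set E : ℕ → Set X := fun j => {x | φ j x = G x}
  have hE : ∀ i, MeasurableSet (disjointed E i) :=
    MeasurableSet.disjointed fun j => measurableSet_eq_fun (hφ j) hG
  have hcover : ⋃ i, disjointed E i = univ := by
    rw [iUnion_disjointed]
    exact eq_univ_of_forall fun x => mem_iUnion.2 (hattain x)
  calc ∫⁻ x in s, G x ∂μ = ∫⁻ x in ⋃ i, disjointed E i, G x ∂μ.restrict s := by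
        rw [hcover, Measure.restrict_univ]
    _ = ∑' i, ∫⁻ x in disjointed E i ∩ s, G x ∂μ := by
        rw [lintegral_iUnion hE (disjoint_disjointed E)]
        simp only [Measure.restrict_restrict (hE _)]
    _ = _ := tsum_congr fun i => setLIntegral_congr_fun ((hE i).inter hs) fun x hx =>
        (disjointed_subset E i hx.1).symm

section Regularity

variable {X : Type*} [TopologicalSpace X] [SecondCountableTopology X]
  [TopologicalSpace.IsCompletelyPseudoMetrizableSpace X] [MeasurableSpace X] [BorelSpace X]
  {μ : Measure X} [SigmaFinite μ]

-- The truncations `min f n` have σ-finite densities, and σ-finite measures on such spaces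
-- are inner regular.
theorem MeasurableSet.setLIntegral_eq_iSup_isCompact {f : X → ℝ≥0∞} (hf : Measurable f)
    {s : Set X} (hs : MeasurableSet s) :
    ∫⁻ x in s, f x ∂μ = ⨆ (K) (_ : K ⊆ s) (_ : IsCompact K), ∫⁻ x in K, f x ∂μ := by
  refine le_antisymm ?_ (iSup₂_le fun K hKs => iSup_le fun _ => lintegral_mono_set hKs)
  have htrunc : ∀ x, ⨆ n : ℕ, min (f x) n = f x := fun x => by
    rw [← inf_iSup_eq, ENNReal.iSup_natCast, inf_top_eq]
  have hmono : Monotone fun (n : ℕ) x => min (f x) n := fun m n hmn x =>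
    min_le_min_left _ (Nat.cast_le.2 hmn)
  calc ∫⁻ x in s, f x ∂μ = ⨆ n : ℕ, ∫⁻ x in s, min (f x) n ∂μ := by
        rw [← lintegral_iSup (fun n => hf.min measurable_const) hmono]
        simp only [htrunc]
    _ ≤ _ := iSup_le fun n => ?_
  have : SigmaFinite (μ.withDensity fun x => min (f x) n) :=
    SigmaFinite.withDensity_of_ne_top' fun x => (min_le_right _ _).trans_lt (by simp) |>.ne
  rw [← withDensity_apply' _ s, hs.measure_eq_iSup_isCompact]
  gcongr with K _ _
  rw [withDensity_apply']
  exact lintegral_mono fun x => min_le_left _ _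

theorem sum_setLIntegral_le_iSup_isCompact {ι : Type*} {φ : ι → X → ℝ≥0∞}
    (hφ : ∀ i, Measurable (φ i)) (I : Finset ι) {B : ι → Set X}
    (hB : ∀ i, MeasurableSet (B i)) :
    ∑ i ∈ I, ∫⁻ x in B i, φ i x ∂μ ≤
      ⨆ (K : ι → Set X) (_ : ∀ i, K i ⊆ B i ∧ IsCompact (K i)), ∑ i ∈ I, ∫⁻ x in K i, φ i x ∂μ := by
  have : ∀ i, Nonempty {K // K ⊆ B i ∧ IsCompact K} := fun i =>
    ⟨⟨∅, empty_subset _, isCompact_empty⟩⟩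
  calc ∑ i ∈ I, ∫⁻ x in B i, φ i x ∂μ
        = ∑ i ∈ I, ⨆ K : {K // K ⊆ B i ∧ IsCompact K}, ∫⁻ x in K, φ i x ∂μ := by
        refine Finset.sum_congr rfl fun i _ => ?_
        rw [(hB i).setLIntegral_eq_iSup_isCompact (hφ i), iSup_subtype']
        simp only [iSup_subtype, iSup_and]
    _ = ⨆ K : ∀ i, {K // K ⊆ B i ∧ IsCompact K}, ∑ i ∈ I, ∫⁻ x in K i, φ i x ∂μ :=
        ENNReal.finsetSum_iSup_eq_iSup_pi I _
    _ ≤ _ := iSup_le fun K => le_iSup₂_of_le (fun i => (K i : Set X)) (fun i => (K i).2) le_rfl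

variable [T2Space X] [LocallyCompactSpace X]

theorem sum_setLIntegral_le_iSup_isOpen {ι : Type*} {φ : ι → X → ℝ≥0∞} (hφ : ∀ i, Measurable (φ i))
    {Ω : Set X} (hΩ : IsOpen Ω) (I : Finset ι) {B : ι → Set X} (hB : ∀ i, MeasurableSet (B i))
    (hBΩ : ∀ i ∈ I, B i ⊆ Ω) (hBdisj : ∀ i ∈ I, ∀ j ∈ I, i ≠ j → Disjoint (B i) (B j)) :
    ∑ i ∈ I, ∫⁻ x in B i, φ i x ∂μ ≤
      ⨆ (A : ι → Set X)
        (_ : ∀ i ∈ I, IsOpen (A i) ∧ IsCompact (closure (A i)) ∧ closure (A i) ⊆ Ω)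
        (_ : ∀ i ∈ I, ∀ j ∈ I, i ≠ j → Disjoint (A i) (A j)),
        ∑ i ∈ I, ∫⁻ x in A i, φ i x ∂μ := by
  refine (sum_setLIntegral_le_iSup_isCompact hφ I hB).trans (iSup₂_le fun K hK => ?_)
  obtain ⟨A, hKA, hA, hAdisj⟩ := exists_isOpen_disjoint_supersets_of_isCompact hΩ
    (fun i _ => (hK i).2) (fun i hi => (hK i).1.trans (hBΩ i hi))
    (fun i hi j hj hij => (hBdisj i hi j hj hij).mono (hK i).1 (hK j).1)
  exact le_iSup₂_of_le A hA <| le_iSup_of_le hAdisj <|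
    Finset.sum_le_sum fun i hi => lintegral_mono_set (hKA i hi)

theorem setLIntegral_le_iSup_isOpen_of_forall_exists_eq {φ : ℕ → X → ℝ≥0∞} {G : X → ℝ≥0∞}
    (hφ : ∀ i, Measurable (φ i)) (hG : Measurable G) (hattain : ∀ x, ∃ i, φ i x = G x)
    {Ω : Set X} (hΩ : IsOpen Ω) :
    ∫⁻ x in Ω, G x ∂μ ≤
      ⨆ (I : Finset ℕ) (A : ℕ → Set X)
        (_ : ∀ i ∈ I, IsOpen (A i) ∧ IsCompact (closure (A i)) ∧ closure (A i) ⊆ Ω)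
        (_ : ∀ i ∈ I, ∀ j ∈ I, i ≠ j → Disjoint (A i) (A j)),
        ∑ i ∈ I, ∫⁻ x in A i, φ i x ∂μ := by
  set E : ℕ → Set X := fun j => {x | φ j x = G x}
  have hE : ∀ i, MeasurableSet (disjointed E i ∩ Ω) := fun i =>
    (MeasurableSet.disjointed (fun j => measurableSet_eq_fun (hφ j) hG) i).inter hΩ.measurableSet
  rw [setLIntegral_eq_tsum_disjointed hφ hG hattain hΩ.measurableSet, ENNReal.tsum_eq_iSup_nat]
  exact iSup_le fun n => le_iSup_of_le (Finset.range n) <|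
    sum_setLIntegral_le_iSup_isOpen hφ hΩ _ hE (fun i _ => inter_subset_right)
      fun i _ j _ hij => (disjoint_disjointed E hij).mono inter_subset_left inter_subset_left

end Regularity

theorem sum_setLIntegral_le_setLIntegral_iSup {X ι : Type*} [MeasurableSpace X] {μ : Measure X}
    (φ : ι → X → ℝ≥0∞) {Ω : Set X} {I : Finset ι} {A : ι → Set X}
    (hA : ∀ i ∈ I, MeasurableSet (A i)) (hAΩ : ∀ i ∈ I, A i ⊆ Ω)
    (hAdisj : ∀ i ∈ I, ∀ j ∈ I, i ≠ j → Disjoint (A i) (A j)) :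
    ∑ i ∈ I, ∫⁻ x in A i, φ i x ∂μ ≤ ∫⁻ x in Ω, ⨆ i, φ i x ∂μ :=
  calc ∑ i ∈ I, ∫⁻ x in A i, φ i x ∂μ
      ≤ ∑ i ∈ I, ∫⁻ x in A i, ⨆ j, φ j x ∂μ :=
        Finset.sum_le_sum fun i _ => lintegral_mono fun x => le_iSup (φ · x) i
    _ = ∫⁻ x in ⋃ i ∈ I, A i, ⨆ j, φ j x ∂μ := (lintegral_biUnion_finset hAdisj hA _).symm
    _ ≤ ∫⁻ x in Ω, ⨆ j, φ j x ∂μ := lintegral_mono_set (iUnion₂_subset hAΩ)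

/-- Localization lemma (Ambrosio–Fusco–Pallara, Lemma 2.35): for a σ-finite Borel measure
`λ` on an open set `Ω ⊆ ℝᴺ` and Borel functions `φᵢ : Ω → [0,∞]`,
`∫_Ω sup_i φᵢ dλ = sup { Σ_{i ∈ I} ∫_{Aᵢ} φᵢ dλ }`, the supremum over finite `I ⊂ ℕ` and
finite families of pairwise disjoint open sets `Aᵢ` with compact closure contained in `Ω`. -/
theorem stmt_12 (N : ℕ) (Ω : Set (EuclideanSpace ℝ (Fin N))) (hΩ : IsOpen Ω)
    (μ : MeasureTheory.Measure (EuclideanSpace ℝ (Fin N)))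
    [MeasureTheory.SigmaFinite μ]
    (φ : ℕ → EuclideanSpace ℝ (Fin N) → ℝ≥0∞) (hφ : ∀ i, Measurable (φ i)) :
    ∫⁻ x in Ω, (⨆ i, φ i x) ∂μ =
      ⨆ (I : Finset ℕ) (A : ℕ → Set (EuclideanSpace ℝ (Fin N)))
        (_ : ∀ i ∈ I, IsOpen (A i) ∧ IsCompact (closure (A i)) ∧ closure (A i) ⊆ Ω)
        (_ : ∀ i ∈ I, ∀ j ∈ I, i ≠ j → Disjoint (A i) (A j)),
        ∑ i ∈ I, ∫⁻ x in A i, φ i x ∂μ := by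
  refine le_antisymm ?_ <| iSup_le fun I => iSup₂_le fun A hA => iSup_le fun hAdisj =>
    sum_setLIntegral_le_setLIntegral_iSup φ (fun i hi => (hA i hi).1.measurableSet)
      (fun i hi => subset_closure.trans (hA i hi).2.2) hAdisj
  have hmeas : ∀ m, Measurable (partialSups φ m) := fun m =>
    Finset.measurable_sup' Finset.nonempty_Iic fun i _ => hφ i
  calc ∫⁻ x in Ω, ⨆ i, φ i x ∂μ = ⨆ m, ∫⁻ x in Ω, partialSups φ m x ∂μ := by
        rw [← lintegral_iSup hmeas (partialSups φ).monotone]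
        simp only [← iSup_apply, iSup_partialSups_eq]
    _ ≤ _ := iSup_le fun m => ?_
  refine setLIntegral_le_iSup_isOpen_of_forall_exists_eq hφ (hmeas m) (fun x => ?_) hΩ
  obtain ⟨i, -, hi⟩ := exists_partialSups_eq (φ · x) m
  exact ⟨i, by rw [Pi.partialSups_apply, hi]⟩
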